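/- The distribution σ(|μ⟩) defined by σ(|μ⟩)[|ρ,τ⟩] = δ_{μ, ρ+τ} (Kronecker delta on real labels) satisfies: the dual action of p̂̄ = (2p̂_A + p̂_c)/3 maps σ(|μ⟩) to (γℓ_P²/6)μ · σ(|μ⟩), and the dual action of ĥ_A^{(ρ)} ĥ_c^{(−ρ)} fixes σ(|μ⟩) for every ρ ∈ ℝ. -/
import Mathlib


/-- `ĥ_A^{(ρ)} : |μ,ν⟩ ↦ |μ+ρ,ν⟩`. -/
noncomputable def holA (ρ : ℝ) : (ℝ × ℝ →₀ ℂ) →ₗ[ℂ] (ℝ × ℝ →₀ ℂ) :=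
  Finsupp.lmapDomain ℂ ℂ fun p => (p.1 + ρ, p.2)

/-- `ĥ_c^{(τ)} : |μ,ν⟩ ↦ |μ,ν+τ⟩`. -/
noncomputable def holc (τ : ℝ) : (ℝ × ℝ →₀ ℂ) →ₗ[ℂ] (ℝ × ℝ →₀ ℂ) :=
  Finsupp.lmapDomain ℂ ℂ fun p => (p.1, p.2 + τ)

/-- `p̂_A`. -/
noncomputable def fluxA (γ ℓP : ℝ) : (ℝ × ℝ →₀ ℂ) →ₗ[ℂ] (ℝ × ℝ →₀ ℂ) :=
  Finsupp.lsum ℂ fun p => ((γ * ℓP ^ 2 / 4 * p.1 : ℝ) : ℂ) • Finsupp.lsingle p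

/-- `p̂_c`. -/
noncomputable def fluxc (γ ℓP : ℝ) : (ℝ × ℝ →₀ ℂ) →ₗ[ℂ] (ℝ × ℝ →₀ ℂ) :=
  Finsupp.lsum ℂ fun p => ((γ * ℓP ^ 2 / 2 * p.2 : ℝ) : ℂ) • Finsupp.lsingle p

/-- `p̂̄ = (2 p̂_A + p̂_c)/3`. -/
noncomputable def fluxBar (γ ℓP : ℝ) : (ℝ × ℝ →₀ ℂ) →ₗ[ℂ] (ℝ × ℝ →₀ ℂ) :=
  (3 : ℂ)⁻¹ • (2 • fluxA γ ℓP + fluxc γ ℓP)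

/-- The isotropic distribution `σ(|μ⟩)`, evaluating `|ρ,τ⟩` to `δ_{μ,ρ+τ}`. -/
noncomputable def sigmaIso (μ : ℝ) : (ℝ × ℝ →₀ ℂ) →ₗ[ℂ] ℂ :=
  Finsupp.lsum ℂ fun p => if p.1 + p.2 = μ then (LinearMap.id : ℂ →ₗ[ℂ] ℂ) else 0
lemma sigmaIso_single (μ : ℝ) (p : ℝ × ℝ) (c : ℂ) :
    sigmaIso μ (Finsupp.single p c) = if p.1 + p.2 = μ then c else 0 := by
  simp [sigmaIso]
  split <;> simp

/-- The dual action of `p̂̄` (whose adjoint is itself, as a real diagonal operator)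
maps `σ(|μ⟩)` to `(γℓ_P²/6)μ · σ(|μ⟩)`, and the dual action of `ĥ_A^{(ρ)} ĥ_c^{(−ρ)}`
(whose adjoint is `ĥ_A^{(−ρ)} ĥ_c^{(ρ)}`) fixes `σ(|μ⟩)`. -/
theorem dual_action_on_isotropic_distribution (γ ℓP : ℝ) (hγ : 0 < γ) (hℓP : 0 < ℓP)
    (μ : ℝ) :
    (sigmaIso μ ∘ₗ fluxBar γ ℓP = ((γ * ℓP ^ 2 / 6 * μ : ℝ) : ℂ) • sigmaIso μ) ∧
    (∀ ρ : ℝ, sigmaIso μ ∘ₗ (holA (-ρ) ∘ₗ holc ρ) = sigmaIso μ) := by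
  constructor
  · apply Finsupp.lhom_ext
    intro p c
    have h1 : fluxBar γ ℓP (Finsupp.single p c) =
        ((3 : ℂ)⁻¹ * (2 * ((γ * ℓP ^ 2 / 4 * p.1 : ℝ) : ℂ) + ((γ * ℓP ^ 2 / 2 * p.2 : ℝ) : ℂ))) • Finsupp.single p c := by
      simp [fluxBar, fluxA, fluxc, smul_smul, two_smul, ← Finsupp.smul_single, mul_add]
      module
    simp only [LinearMap.comp_apply, h1, map_smul, LinearMap.smul_apply, sigmaIso_single]
    split
    · rename_i h
      rw [← h, smul_eq_mul, smul_eq_mul]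
      push_cast
      ring
    · simp
  · intro ρ
    apply Finsupp.lhom_ext
    intro p c
    simp only [LinearMap.comp_apply, holA, holc, Finsupp.lmapDomain_apply,
      Finsupp.mapDomain_single, sigmaIso_single]
    congr 1
    simp only [eq_iff_iff]
    constructor <;> intro h <;> linarith
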